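/- Let n ≥ mk and let σ be a uniformly random permutation of [n]. Then the k-th moment of C_m^{(n)}, the number of m-cycles of σ, equals T_k(1/m) = ∑_{l=1}^k S(k,l) / m^l. -/

import Mathlib

/-!
Expand `c ^ k` in falling factorials: sorting the `c ^ k` maps `Fin k → Fin c` by their kernel
partition gives `c ^ k = ∑ₗ S(k, l) · c.descFactorial l`. It then suffices that the falling
factorial moments are `E[(C_m)_l] = m⁻ˡ` for `l * m ≤ n`, which is a double count of pairs
`(σ, ι)` where `ι : Fin l × Fin m ↪ Fin n` traces `l` distinct `m`-cycles of `σ` from chosen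
starting points. For fixed `σ` there are `(C_m σ)_l * m ^ l` such `ι`; for fixed `ι`, the
permutation `σ` is prescribed on the `l * m` points of the range of `ι` and free elsewhere,
leaving `(n - l * m)!` choices. Summing over the `n.descFactorial (l * m)` embeddings gives `n!`.
-/

open scoped BigOperators

noncomputable def stirling2 (n j : ℕ) : ℕ :=
  Nat.card {P : Finpartition (Finset.univ : Finset (Fin n)) // P.parts.card = j}

noncomputable def cycleCount {n : ℕ} (σ : Equiv.Perm (Fin n)) (m : ℕ) : ℕ :=
  Nat.card {D : Finset (Fin n) // D.card = m ∧ σ.IsCycleOn ↑D}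

open Equiv Finset Function
open Fin.NatCast

namespace Finpartition

variable {α : Type*} [DecidableEq α] {s : Finset α}

theorem parts_eq_image_part (P : Finpartition s) : P.parts = s.image P.part := by
  ext t
  refine ⟨fun ht => ?_, fun ht => ?_⟩
  · obtain ⟨a, ha, rfl⟩ := P.part_surjOn ht
    exact mem_image_of_mem _ ha
  · obtain ⟨a, ha, rfl⟩ := mem_image.1 ht
    exact P.part_mem.2 ha

theorem ext_part {P Q : Finpartition s} (h : ∀ a ∈ s, P.part a = Q.part a) : P = Q := by
  ext1
  rw [parts_eq_image_part, parts_eq_image_part]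
  exact image_congr h

variable [Fintype α] {β : Type*}

noncomputable def ker (f : α → β) : Finpartition (univ : Finset α) :=
  letI := Classical.decRel (Setoid.ker f).r
  ofSetoid (Setoid.ker f)

theorem mem_part_ker {f : α → β} {a b : α} : b ∈ (ker f).part a ↔ f a = f b := by
  classical
  exact mem_part_ofSetoid_iff_rel

noncomputable def kerEquivEmbedding (P : Finpartition (univ : Finset α)) :
    {f : α → β // ker f = P} ≃ (P.parts ↪ β) where
  toFun f := ⟨fun t => f.1 (P.nonempty_of_mem_parts t.2).choose, by
    obtain ⟨f, rfl⟩ := f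
    rintro ⟨t, ht⟩ ⟨t', ht'⟩ htt'
    have hmem := (ker f).part_eq_of_mem ht ((ker f).nonempty_of_mem_parts ht).choose_spec ▸
      mem_part_ker.2 htt'
    exact Subtype.ext ((ker f).eq_of_mem_parts ht ht' hmem
      ((ker f).nonempty_of_mem_parts ht').choose_spec)⟩
  invFun g := ⟨fun a => g ⟨P.part a, P.part_mem.2 (mem_univ a)⟩, by
    refine ext_part fun a _ => Finset.ext fun b => ?_
    rw [mem_part_ker, g.apply_eq_iff_eq, Subtype.mk.injEq,
      P.mem_part_iff_part_eq_part (mem_univ b) (mem_univ a), eq_comm]⟩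
  left_inv := by
    rintro ⟨f, rfl⟩
    refine Subtype.ext (funext fun a => ?_)
    exact (mem_part_ker.1 ((ker f).nonempty_of_mem_parts
      ((ker f).part_mem.2 (mem_univ a))).choose_spec).symm
  right_inv g := Embedding.ext fun t =>
    congrArg g (Subtype.ext (P.part_eq_of_mem t.2 (P.nonempty_of_mem_parts t.2).choose_spec))

theorem card_fun_eq_sum_descFactorial [Fintype β] :
    Fintype.card β ^ Fintype.card α =
      ∑ P : Finpartition (univ : Finset α), (Fintype.card β).descFactorial #P.parts := by
  classical
  rw [← Fintype.card_fun, ← Fintype.card_congr (Equiv.sigmaFiberEquiv ker), Fintype.card_sigma]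
  refine sum_congr rfl fun P _ => ?_
  rw [Fintype.card_congr (kerEquivEmbedding P), Fintype.card_embedding_eq, Fintype.card_coe]

end Finpartition

theorem pow_eq_sum_stirling2_mul_descFactorial (c : ℕ) {k : ℕ} (hk : k ≠ 0) :
    c ^ k = ∑ l ∈ Icc 1 k, stirling2 k l * c.descFactorial l := by
  classical
  have hfun : c ^ k = ∑ P : Finpartition (univ : Finset (Fin k)), c.descFactorial #P.parts := by
    simpa only [Fintype.card_fin] using
      Finpartition.card_fun_eq_sum_descFactorial (α := Fin k) (β := Fin c)
  rw [hfun, ← sum_fiberwise_of_maps_to (g := fun P => #P.parts) (t := Icc 1 k)]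
  · refine sum_congr rfl fun l _ => ?_
    rw [sum_congr rfl fun P hP => by rw [(mem_filter.1 hP).2], sum_const, smul_eq_mul, stirling2,
      Nat.card_eq_fintype_card, Fintype.card_subtype]
  · intro P _
    have huniv : (univ : Finset (Fin k)).Nonempty := univ_nonempty_iff.2 ⟨⟨0, by omega⟩⟩
    exact mem_Icc.2 ⟨card_pos.2 (P.parts_nonempty huniv.ne_empty),
      by simpa using P.card_parts_le_card⟩

namespace Equiv.Perm

namespace IsCycleOn

variable {α : Type*} {σ : Perm α} {s t : Finset α} {a : α} {m : ℕ}

theorem eq_of_mem_of_mem (hs : σ.IsCycleOn s) (ht : σ.IsCycleOn t) (has : a ∈ s) (hat : a ∈ t) :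
    s = t := by
  rw [← coe_inj, ← hs.range_pow s.finite_toSet has, ht.range_pow t.finite_toSet hat]

theorem pow_apply_injective (hs : σ.IsCycleOn s) (hsm : #s = m) (ha : a ∈ s) :
    Injective fun j : Fin m => (σ ^ (j : ℕ)) a := fun i j hij => by
  subst hsm
  exact Fin.ext (((hs.pow_apply_eq_pow_apply ha).1 hij).eq_of_lt_of_lt i.2 j.2)

theorem range_fin_pow_apply (hs : σ.IsCycleOn s) (hsm : #s = m) (ha : a ∈ s) :
    Set.range (fun j : Fin m => (σ ^ (j : ℕ)) a) = s := by
  subst hsm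
  refine Set.Subset.antisymm (Set.range_subset_iff.2 fun j => hs.1.mapsTo.perm_pow _ ha) ?_
  intro b hb
  obtain ⟨t, ht, rfl⟩ := hs.exists_pow_eq ha hb
  exact ⟨⟨t, ht⟩, rfl⟩

end IsCycleOn

variable {α : Type*} {l m : ℕ}

abbrev CyclesOfCard (σ : Perm α) (m : ℕ) : Type _ :=
  {s : Finset α // #s = m ∧ σ.IsCycleOn s}

def cycleBlock (ι : Fin l × Fin m ↪ α) (i : Fin l) : Finset α :=
  univ.map ((Embedding.sectR i (Fin m)).trans ι)

theorem mem_cycleBlock {ι : Fin l × Fin m ↪ α} {i : Fin l} {a : α} :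
    a ∈ cycleBlock ι i ↔ ∃ j, ι (i, j) = a := by
  simp [cycleBlock]

theorem card_cycleBlock (ι : Fin l × Fin m ↪ α) (i : Fin l) : #(cycleBlock ι i) = m := by
  simp [cycleBlock]

@[simps]
def embOfCycles (σ : Perm α) (D : Fin l ↪ σ.CyclesOfCard m)
    (x : Fintype.piFinset fun i => (D i).1) : Fin l × Fin m ↪ α where
  toFun p := (σ ^ (p.2 : ℕ)) (x.1 p.1)
  inj' := by
    rintro ⟨i, j⟩ ⟨i', j'⟩ hp
    dsimp only at hp
    have hx := fun i => Fintype.mem_piFinset.1 x.2 i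
    have hcyc := fun i => (D i).2.2
    have hi : i = i' := D.injective <| Subtype.ext <| (hcyc i).eq_of_mem_of_mem (hcyc i')
      ((hcyc i).1.mapsTo.perm_pow _ (hx i)) (hp ▸ (hcyc i').1.mapsTo.perm_pow _ (hx i'))
    subst hi
    exact Prod.ext rfl ((hcyc i).pow_apply_injective (D i).2.1 (hx i) hp)

section TracesCycles

variable [NeZero m]

theorem cycleBlock_injective (ι : Fin l × Fin m ↪ α) : Injective (cycleBlock ι) := fun i i' h => by
  obtain ⟨j, hj⟩ := mem_cycleBlock.1 (h ▸ mem_cycleBlock.2 ⟨0, rfl⟩ : ι (i, 0) ∈ cycleBlock ι i')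
  exact (Prod.ext_iff.1 (ι.injective hj)).1.symm

def TracesCycles (σ : Perm α) (ι : Fin l × Fin m ↪ α) : Prop :=
  ∀ i j, σ (ι (i, j)) = ι (i, j + 1)

namespace TracesCycles

variable {σ : Perm α} {ι : Fin l × Fin m ↪ α}

theorem pow_apply (h : σ.TracesCycles ι) (t : ℕ) (i : Fin l) (j : Fin m) :
    (σ ^ t) (ι (i, j)) = ι (i, j + t) := by
  induction t generalizing j with
  | zero => simp
  | succ t ih => rw [pow_succ, mul_apply, h, ih, Nat.cast_succ, add_assoc, add_comm 1]

theorem apply_eq_pow_apply (h : σ.TracesCycles ι) (i : Fin l) (j : Fin m) :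
    ι (i, j) = (σ ^ (j : ℕ)) (ι (i, 0)) := by
  rw [h.pow_apply, zero_add, Fin.cast_val_eq_self]

theorem isCycleOn_cycleBlock (h : σ.TracesCycles ι) (i : Fin l) :
    σ.IsCycleOn (cycleBlock ι i) := by
  refine ⟨⟨?_, σ.injective.injOn, ?_⟩, ?_⟩
  · rintro _ hb
    obtain ⟨j, rfl⟩ := mem_cycleBlock.1 hb
    exact mem_cycleBlock.2 ⟨j + 1, (h i j).symm⟩
  · rintro _ hb
    obtain ⟨j, rfl⟩ := mem_cycleBlock.1 hb
    exact ⟨ι (i, j - 1), mem_cycleBlock.2 ⟨j - 1, rfl⟩, by rw [h, sub_add_cancel]⟩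
  · rintro _ hb _ hb'
    obtain ⟨j, rfl⟩ := mem_cycleBlock.1 hb
    obtain ⟨j', rfl⟩ := mem_cycleBlock.1 hb'
    exact ⟨((j' - j : Fin m) : ℕ), by
      rw [zpow_natCast, h.pow_apply, Fin.cast_val_eq_self, add_sub_cancel]⟩

end TracesCycles

section Fiber

variable (σ : Perm α)

theorem tracesCycles_embOfCycles (D : Fin l ↪ σ.CyclesOfCard m)
    (x : Fintype.piFinset fun i => (D i).1) : σ.TracesCycles (embOfCycles σ D x) := by
  intro i j
  rw [embOfCycles_apply, embOfCycles_apply, ← mul_apply, ← pow_succ']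
  refine ((D i).2.2.pow_apply_eq_pow_apply (Fintype.mem_piFinset.1 x.2 i)).2 ?_
  rw [(D i).2.1]
  simp [Nat.ModEq, Fin.val_add]

def tracesCyclesEquiv :
    {ι : Fin l × Fin m ↪ α // σ.TracesCycles ι} ≃
      Σ D : Fin l ↪ σ.CyclesOfCard m, Fintype.piFinset fun i => (D i).1 where
  toFun ι := ⟨⟨fun i => ⟨cycleBlock ι.1 i, card_cycleBlock _ i, ι.2.isCycleOn_cycleBlock i⟩,
      fun _ _ h => cycleBlock_injective _ (congrArg Subtype.val h)⟩,
    ⟨fun i => ι.1 (i, 0), Fintype.mem_piFinset.2 fun _ => mem_cycleBlock.2 ⟨0, rfl⟩⟩⟩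
  invFun x := ⟨embOfCycles σ x.1 x.2, tracesCycles_embOfCycles σ x.1 x.2⟩
  left_inv ι := Subtype.ext <| Embedding.ext fun p => (ι.2.apply_eq_pow_apply p.1 p.2).symm
  right_inv x := by
    refine Sigma.subtype_ext (Embedding.ext fun i => Subtype.ext ?_) (funext fun i => ?_)
    · ext b
      change b ∈ cycleBlock _ i ↔ _
      rw [mem_cycleBlock, ← mem_coe, ← (x.1 i).2.2.range_fin_pow_apply (x.1 i).2.1
        (Fintype.mem_piFinset.1 x.2.2 i)]
      rfl
    · simp

theorem card_tracesCycles [Fintype α] :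
    Nat.card {ι : Fin l × Fin m ↪ α // σ.TracesCycles ι} =
      (Nat.card (σ.CyclesOfCard m)).descFactorial l * m ^ l := by
  classical
  have hfiber (D : Fin l ↪ σ.CyclesOfCard m) :
      Fintype.card (Fintype.piFinset fun i => (D i).1) = m ^ l := by
    rw [Fintype.card_coe, Fintype.card_piFinset, prod_congr rfl fun i _ => (D i).2.1, prod_const,
      card_univ, Fintype.card_fin]
  rw [Nat.card_congr (tracesCyclesEquiv σ), Nat.card_eq_fintype_card, Fintype.card_sigma]
  simp only [hfiber, sum_const, card_univ, smul_eq_mul, Fintype.card_embedding_eq,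
    Fintype.card_fin, Nat.card_eq_fintype_card]

end Fiber

variable [DecidableEq α]

def blockRotation (ι : Fin l × Fin m ↪ α) : Perm α :=
  Perm.viaFintypeEmbedding (prodCongr (Equiv.refl (Fin l)) (Equiv.addRight (1 : Fin m))) ι

theorem tracesCycles_blockRotation (ι : Fin l × Fin m ↪ α) : (blockRotation ι).TracesCycles ι :=
  fun _ _ => viaFintypeEmbedding_apply_image _ _ _

theorem card_perm_tracesCycles [Fintype α] (ι : Fin l × Fin m ↪ α) :
    Nat.card {σ : Perm α // σ.TracesCycles ι} = (Fintype.card α - l * m).factorial := by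
  classical
  -- `σ` traces `ι` iff it agrees with `blockRotation ι` on the range of `ι`.
  have e : {σ : Perm α // σ.TracesCycles ι} ≃ {τ : Perm α // ∀ a, ¬a ∉ Set.range ι → τ a = a} :=
    (Equiv.mulLeft (blockRotation ι)⁻¹).subtypeEquiv fun σ => by
      simp only [TracesCycles, Set.forall_mem_range, not_not, Prod.forall, coe_mulLeft, mul_apply,
        Perm.inv_eq_iff_eq, tracesCycles_blockRotation ι _ _]
  rw [Nat.card_congr (e.trans (Perm.subtypeEquivSubtypePerm _).symm), Nat.card_eq_fintype_card,
    Fintype.card_perm, Fintype.card_subtype_compl, Fintype.card_range ι, Fintype.card_prod,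
    Fintype.card_fin, Fintype.card_fin]

theorem sum_card_tracesCycles [Fintype α] (hlm : l * m ≤ Fintype.card α) :
    ∑ σ : Perm α, Nat.card {ι : Fin l × Fin m ↪ α // σ.TracesCycles ι} =
      (Fintype.card α).factorial := by
  classical
  calc ∑ σ : Perm α, Nat.card {ι : Fin l × Fin m ↪ α // σ.TracesCycles ι}
      = ∑ ι : Fin l × Fin m ↪ α, Nat.card {σ : Perm α // σ.TracesCycles ι} := by
        simp only [Nat.card_eq_fintype_card, Fintype.card_subtype]
        exact sum_card_bipartiteAbove_eq_sum_card_bipartiteBelow _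
    _ = (Fintype.card α).factorial := by
        simp only [card_perm_tracesCycles, sum_const, card_univ, smul_eq_mul,
          Fintype.card_embedding_eq, Fintype.card_prod, Fintype.card_fin]
        rw [mul_comm, Nat.factorial_mul_descFactorial hlm]

end TracesCycles

theorem sum_descFactorial_card_cyclesOfCard_mul_pow [DecidableEq α] [Fintype α] (hm : m ≠ 0)
    (hlm : l * m ≤ Fintype.card α) :
    (∑ σ : Perm α, (Nat.card (σ.CyclesOfCard m)).descFactorial l) * m ^ l =
      (Fintype.card α).factorial := by
  have : NeZero m := ⟨hm⟩
  rw [sum_mul, ← sum_card_tracesCycles hlm]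
  exact sum_congr rfl fun σ _ => (card_tracesCycles σ).symm

end Equiv.Perm

/-- The k-th moment of the number of m-cycles of a uniform permutation of [n],
for n ≥ mk, equals T_k(1/m) = ∑_{l=1}^k S(k,l)/m^l. -/
theorem moment_cycleCount (n m k : ℕ) (hm : 1 ≤ m) (hk : 1 ≤ k) (hn : m * k ≤ n) :
    (∑ σ : Equiv.Perm (Fin n), (cycleCount σ m : ℝ) ^ k) / n.factorial =
      ∑ l ∈ Finset.Icc 1 k, (stirling2 k l : ℝ) * (1 / m) ^ l := by
  have hfactorialMoment : ∀ l ∈ Icc 1 k,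
      (∑ σ : Perm (Fin n), ((cycleCount σ m).descFactorial l : ℝ)) / n.factorial = (1 / m) ^ l := by
    intro l hl
    have hlm : l * m ≤ Fintype.card (Fin n) := by
      rw [Fintype.card_fin, mul_comm]
      exact (Nat.mul_le_mul_left m (mem_Icc.1 hl).2).trans hn
    have h : (∑ σ : Perm (Fin n), (cycleCount σ m).descFactorial l) * m ^ l = n.factorial := by
      have := Perm.sum_descFactorial_card_cyclesOfCard_mul_pow (by omega) hlm
      rwa [Fintype.card_fin] at this
    rw [div_eq_iff (by positivity), ← h, Nat.cast_mul, Nat.cast_pow, mul_left_comm, ← mul_pow,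
      one_div_mul_cancel (by positivity), one_pow, mul_one, Nat.cast_sum]
  calc (∑ σ : Perm (Fin n), (cycleCount σ m : ℝ) ^ k) / n.factorial
      = (∑ σ : Perm (Fin n), ∑ l ∈ Icc 1 k,
          (stirling2 k l : ℝ) * (cycleCount σ m).descFactorial l) / n.factorial := by
        congr 1
        refine sum_congr rfl fun σ _ => ?_
        exact_mod_cast pow_eq_sum_stirling2_mul_descFactorial (cycleCount σ m) (by omega)
    _ = ∑ l ∈ Icc 1 k, (stirling2 k l : ℝ) *
          ((∑ σ : Perm (Fin n), ((cycleCount σ m).descFactorial l : ℝ)) / n.factorial) := by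
        rw [sum_comm, sum_div]
        exact sum_congr rfl fun l _ => by rw [← mul_sum, mul_div_assoc]
    _ = ∑ l ∈ Icc 1 k, (stirling2 k l : ℝ) * (1 / m) ^ l :=
        sum_congr rfl fun l hl => by rw [hfactorialMoment l hl]
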